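/- There is R₀ = R₀(Σ) such that for every R ≥ R₀ there is α₀ = α₀(R,Σ) > 0 small so that if α ∈ (0,α₀) then h ≥ f_{3R,α} on ∂Σ_R and h ≤ f_{3R,α} on ∂Σ_{2R}, where f_{3R,α} = v + α·φ_{3R} and h = max_{∂Σ_R} f_{3R,α}. -/
import Mathlib


/-!
Common definitions formalizing the framework of
"Mean curvature flow with generic initial data / resolution of point singularities":
smooth hypersurfaces (via local defining functions), classical mean curvature flows
(via the level-set PDE), weak set flows and the level set flow (via avoidance of
classical flows), smooth cones, isolated conical singularities, self-expanders,
the expander Jacobi operator, Brakke flows, Gaussian densities, and barriers.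
-/

open Set Metric Filter MeasureTheory
open scoped RealInnerProductSpace Topology ENNReal Pointwise

noncomputable section
attribute [local instance] Classical.propDecidable

/-- The ambient Euclidean space `ℝ^{n+1}`. -/
abbrev Euc (n : ℕ) : Type := EuclideanSpace ℝ (Fin (n + 1))

variable {n : ℕ}

/-! ### Differential operators on the ambient space -/

/-- The Hessian of `f : ℝ^{n+1} → ℝ` at `x`, as a continuous linear map. -/
def hessOp (f : Euc n → ℝ) (x : Euc n) : Euc n →L[ℝ] Euc n :=
  fderiv ℝ (gradient f) x

/-- The Laplacian of `f` at `x`. -/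
def lapl (f : Euc n → ℝ) (x : Euc n) : ℝ :=
  LinearMap.trace ℝ (Euc n) (hessOp f x : Euc n →ₗ[ℝ] Euc n)

/-- The scalar mean curvature of the level set `{f = 0}` at `x`, computed with respect to the
unit normal `ν = ∇f/|∇f|`; `H = (Hess f(ν,ν) - Δf)/|∇f|`, so that the mean curvature
vector is `H ν`. -/
def meanCurvF (f : Euc n → ℝ) (x : Euc n) : ℝ :=
  (⟪hessOp f x (gradient f x), gradient f x⟫ / ‖gradient f x‖ ^ 2 - lapl f x) /
    ‖gradient f x‖

/-- The unit normal `∇f/|∇f|` of a level set of `f`. -/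
def unitNormalOfFn (f : Euc n → ℝ) (x : Euc n) : Euc n :=
  ‖gradient f x‖⁻¹ • gradient f x

/-- A local smooth defining function for a set `M` near a point `x`: `M` coincides with the
zero set of `f` in a ball around `x`, where `f` is smooth with nonvanishing gradient on its
zero set. -/
structure LocalDefFn (n : ℕ) (M : Set (Euc n)) (x : Euc n) where
  f : Euc n → ℝ
  r : ℝ
  r_pos : 0 < r
  smooth : ContDiffOn ℝ (⊤ : ℕ∞) f (ball x r)
  zeroSet : ∀ y ∈ ball x r, (f y = 0 ↔ y ∈ M)
  grad_ne : ∀ y ∈ ball x r, f y = 0 → gradient f y ≠ 0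

/-- `M ⊂ ℝ^{n+1}` is a smooth (embedded) hypersurface: every point has a local smooth
defining function. -/
def IsSmoothHypersurface (M : Set (Euc n)) : Prop :=
  ∀ x ∈ M, Nonempty (LocalDefFn n M x)

/-- `ν` is a choice of unit normal vector field along the hypersurface `S`. -/
def IsUnitNormalField (S : Set (Euc n)) (ν : Euc n → Euc n) : Prop :=
  ∀ x ∈ S, ‖ν x‖ = 1 ∧ ∀ d : LocalDefFn n S x, |⟪ν x, gradient d.f x⟫| = ‖gradient d.f x‖

/-- Orthogonal projection onto the hyperplane orthogonal to `ν` (the tangent space when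
`ν` is the unit normal). -/
def tangProj (ν : Euc n) : Euc n →L[ℝ] Euc n :=
  ContinuousLinearMap.id ℝ (Euc n) - (innerSL ℝ ν).smulRight ν

/-- The shape operator of the level set `{f = 0}` at `x` (tangential part of `Dν`). -/
def shapeOp (f : Euc n → ℝ) (x : Euc n) : Euc n →L[ℝ] Euc n :=
  (tangProj (unitNormalOfFn f x)).comp
    ((fderiv ℝ (unitNormalOfFn f) x).comp (tangProj (unitNormalOfFn f x)))

/-- `|A|²`, the squared norm of the second fundamental form of `{f = 0}` at `x`. -/
def secondFFSq (f : Euc n → ℝ) (x : Euc n) : ℝ :=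
  LinearMap.trace ℝ (Euc n)
    ((ContinuousLinearMap.adjoint (shapeOp f x)).comp (shapeOp f x) : Euc n →ₗ[ℝ] Euc n)

/-- Tangential gradient `∇_Σ v` along `{f = 0}` of (an ambient extension of) `v`. -/
def tangGrad (f v : Euc n → ℝ) (x : Euc n) : Euc n :=
  tangProj (unitNormalOfFn f x) (gradient v x)

/-- Laplace–Beltrami operator `Δ_Σ v` along `{f = 0}`, computed from an ambient extension:
`Δ_Σ v = Δv - Hess v(ν,ν) + H ⟨∇v, ν⟩`. -/
def laplBeltrami (f v : Euc n → ℝ) (x : Euc n) : ℝ :=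
  lapl v x - ⟪hessOp v x (unitNormalOfFn f x), unitNormalOfFn f x⟫ +
    meanCurvF f x * ⟪gradient v x, unitNormalOfFn f x⟫

/-- The expander Jacobi (stability) operator
`L_Σ v = Δ_Σ v + (x/2)·∇_Σ v - v/2 + |A_Σ|² v` along the hypersurface `{f = 0}`. -/
def jacobiAt (f v : Euc n → ℝ) (x : Euc n) : ℝ :=
  laplBeltrami f v x + ⟪x, tangGrad f v x⟫ / 2 - v x / 2 + secondFFSq f x * v x

/-- The Jacobi operator of the hypersurface `S` applied to `v` at `x ∈ S`, using a local
defining function for `S` at `x` (the value is independent of this choice). -/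
def jacobiOf (S : Set (Euc n)) (v : Euc n → ℝ) (x : Euc n) : ℝ :=
  if h : Nonempty (LocalDefFn n S x) then jacobiAt h.some.f v x else 0

/-- The tangential gradient along `S` of `v` at `x ∈ S`. -/
def tangGradOf (S : Set (Euc n)) (v : Euc n → ℝ) (x : Euc n) : Euc n :=
  if h : Nonempty (LocalDefFn n S x) then tangGrad h.some.f v x else 0

/-! ### Classical mean curvature flows, weak set flows and the level set flow -/

/-- A classical (compact, smooth) mean curvature flow on a time interval `[a,b]`, presented
by a global smooth level-set function `u`: the slices `{u(·,t) = 0}` are compact regular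
level sets moving by mean curvature, i.e. `∂_t u = Δu - Hess u(ν,ν)` on the zero set. -/
structure ClassicalMCF (n : ℕ) where
  a : ℝ
  b : ℝ
  hab : a ≤ b
  u : Euc n → ℝ → ℝ
  smooth : ContDiff ℝ (⊤ : ℕ∞) fun p : Euc n × ℝ => u p.1 p.2
  cpt : ∀ t ∈ Icc a b, IsCompact {x | u x t = 0}
  reg : ∀ t ∈ Icc a b, ∀ x, u x t = 0 → gradient (u · t) x ≠ 0
  pde : ∀ t ∈ Icc a b, ∀ x, u x t = 0 →
    deriv (u x) t = lapl (u · t) x -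
      ⟪hessOp (u · t) x (gradient (u · t) x), gradient (u · t) x⟫ /
        ‖gradient (u · t) x‖ ^ 2

/-- The time-`t` slice of a classical mean curvature flow. -/
def ClassicalMCF.slice (Ψ : ClassicalMCF n) (t : ℝ) : Set (Euc n) := {x | Ψ.u x t = 0}

/-- A classical solution of *rescaled* mean curvature flow `(∂_τ x)^⊥ = H - x^⊥/2`,
presented by a global smooth level-set function. -/
structure ClassicalRescaledMCF (n : ℕ) where
  a : ℝ
  b : ℝ
  hab : a ≤ b
  u : Euc n → ℝ → ℝ
  smooth : ContDiff ℝ (⊤ : ℕ∞) fun p : Euc n × ℝ => u p.1 p.2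
  cpt : ∀ t ∈ Icc a b, IsCompact {x | u x t = 0}
  reg : ∀ t ∈ Icc a b, ∀ x, u x t = 0 → gradient (u · t) x ≠ 0
  pde : ∀ t ∈ Icc a b, ∀ x, u x t = 0 →
    deriv (u x) t = lapl (u · t) x -
      ⟪hessOp (u · t) x (gradient (u · t) x), gradient (u · t) x⟫ /
        ‖gradient (u · t) x‖ ^ 2 + ⟪x, gradient (u · t) x⟫ / 2

/-- The time-`t` slice of a classical rescaled mean curvature flow. -/
def ClassicalRescaledMCF.slice (Ψ : ClassicalRescaledMCF n) (t : ℝ) : Set (Euc n) :=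
  {x | Ψ.u x t = 0}

/-- `F` is a weak set flow generated by the closed set `Γ`: `F 0 = Γ`, the slices are closed,
and `F` avoids every classical mean curvature flow that is initially disjoint from it. -/
def IsWeakSetFlow (Γ : Set (Euc n)) (F : ℝ → Set (Euc n)) : Prop :=
  F 0 = Γ ∧ (∀ t, IsClosed (F t)) ∧
    ∀ Ψ : ClassicalMCF n, 0 ≤ Ψ.a →
      Disjoint (Ψ.slice Ψ.a) (F Ψ.a) →
      ∀ t ∈ Icc Ψ.a Ψ.b, Disjoint (Ψ.slice t) (F t)

/-- `F` is *the* level set flow of `Γ`: the maximal weak set flow generated by `Γ`. -/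
def IsLevelSetFlow (Γ : Set (Euc n)) (F : ℝ → Set (Euc n)) : Prop :=
  IsWeakSetFlow Γ F ∧ ∀ G : ℝ → Set (Euc n), IsWeakSetFlow Γ G → ∀ t ≥ (0 : ℝ), G t ⊆ F t

/-- The level set flow of `Γ` fattens: at some time it has nonempty interior. -/
def FattensEventually (Γ : Set (Euc n)) : Prop :=
  ∀ F : ℝ → Set (Euc n), IsLevelSetFlow Γ F → ∃ t ≥ (0 : ℝ), (interior (F t)).Nonempty

/-! ### Convergence notions -/

/-- Local Hausdorff convergence of a family of sets `A i → B` along a filter `l`: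
on every compact set, each set is eventually `ε`-close to the other. -/
def LocalHausdorffTendsTo {ι : Type*} (l : Filter ι) (A : ι → Set (Euc n))
    (B : Set (Euc n)) : Prop :=
  ∀ K : Set (Euc n), IsCompact K → ∀ ε > 0, ∀ᶠ i in l,
    (∀ x ∈ A i ∩ K, ∃ y ∈ B, dist x y < ε) ∧ ∀ y ∈ B ∩ K, ∃ x ∈ A i, dist x y < ε

/-- `C^∞_loc` convergence of hypersurfaces `A i → B` along a filter `l`, away from the closed
set `avoid`: local Hausdorff convergence on compact sets disjoint from `avoid`, together with
local smooth convergence of defining functions (all derivatives converge uniformly). -/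
def SmoothlyTendsTo {ι : Type*} (l : Filter ι) (A : ι → Set (Euc n)) (B : Set (Euc n))
    (avoid : Set (Euc n)) : Prop :=
  (∀ K : Set (Euc n), IsCompact K → Disjoint K avoid → ∀ ε > 0, ∀ᶠ i in l,
    (∀ x ∈ A i ∩ K, ∃ y ∈ B, dist x y < ε) ∧ ∀ y ∈ B ∩ K, ∃ x ∈ A i, dist x y < ε) ∧
  ∀ x ∈ B, x ∉ avoid → ∃ r > 0, ∃ g : Euc n → ℝ, ∃ f : ι → Euc n → ℝ,
    ContDiffOn ℝ (⊤ : ℕ∞) g (ball x r) ∧ (∀ y ∈ ball x r, (g y = 0 ↔ y ∈ B)) ∧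
    (∀ y ∈ ball x r, g y = 0 → gradient g y ≠ 0) ∧
    (∀ᶠ i in l, ContDiffOn ℝ (⊤ : ℕ∞) (f i) (ball x r) ∧
      ∀ y ∈ ball x r, (f i y = 0 ↔ y ∈ A i)) ∧
    ∀ k : ℕ, TendstoUniformlyOn (fun i y => iteratedFDeriv ℝ k (f i) y)
      (iteratedFDeriv ℝ k g) l (ball x r)

/-! ### Cones and conical singularities -/

/-- A smooth cone in `ℝ^{n+1}`: a nontrivial closed dilation-invariant set which is a smooth
hypersurface away from the vertex `0` (equivalently, the cone over a smooth, embedded,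
closed hypersurface `S ⊂ 𝕊ⁿ`). -/
def IsSmoothCone (C : Set (Euc n)) : Prop :=
  IsClosed C ∧ (C \ {0}).Nonempty ∧ (∀ r : ℝ, 0 < r → r • C = C) ∧
    IsSmoothHypersurface (C \ {0})

/-- `M` is a smooth hypersurface with an isolated conical singularity at `x₀`, modeled on the
smooth cone `C`: `M \ {x₀}` is a smooth embedded hypersurface, and `ρ ⬝ (M - x₀) → C` in
`C^∞_loc(ℝ^{n+1} \ {0})` as `ρ → ∞`. -/
def HasIsolatedConicalSingularity (M : Set (Euc n)) (x₀ : Euc n) (C : Set (Euc n)) : Prop :=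
  IsClosed M ∧ x₀ ∈ M ∧ IsSmoothHypersurface (M \ {x₀}) ∧
    SmoothlyTendsTo atTop (fun ρ : ℝ => ρ • ((fun y => y - x₀) '' M)) C ({0} : Set (Euc n))

/-! ### Regions, inner and outer flows -/

/-- A closed set which is the closure of its interior. -/
def Admissible (F : Set (Euc n)) : Prop := IsClosed F ∧ F = closure (interior F)

/-- `U` is the compact region bounded by the hypersurface `M`. -/
def BoundsCompactRegion (M U : Set (Euc n)) : Prop :=
  IsCompact U ∧ Admissible U ∧ frontier U = M

/-- The spacetime track `{(x,t) : t ≥ 0, x ∈ F t}` of a family of sets. -/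
def spacetimeTrack (F : ℝ → Set (Euc n)) : Set (Euc n × ℝ) :=
  {p | 0 ≤ p.2 ∧ p.1 ∈ F p.2}

/-- `Mt` is the outer flow of `∂U` determined by the region `U`: the boundary slices
`Mt t = {x : (x,t) ∈ ∂𝕄}` of the spacetime level set flow `𝕄` of `U`. -/
def IsOuterFlow (U : Set (Euc n)) (Mt : ℝ → Set (Euc n)) : Prop :=
  ∃ G : ℝ → Set (Euc n), IsLevelSetFlow U G ∧ Mt 0 = frontier U ∧
    ∀ t > (0 : ℝ), Mt t = {x | (x, t) ∈ frontier (spacetimeTrack G)}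

/-- `Mt` is the inner flow of `∂U`: the outer flow of the closed complement `U' = cl(Uᶜ)`. -/
def IsInnerFlow (U : Set (Euc n)) (Mt : ℝ → Set (Euc n)) : Prop :=
  IsOuterFlow (closure Uᶜ) Mt

/-- The family of sets `t ↦ Mfam t` is a smooth mean curvature flow for times in `I`:
near every spacetime point it is the regular zero level set of a smooth function satisfying
the level-set mean curvature flow PDE. -/
def IsSmoothMCFOn (Mfam : ℝ → Set (Euc n)) (I : Set ℝ) : Prop :=
  ∀ t₀ ∈ I, ∀ x₀ ∈ Mfam t₀, ∃ r > 0, ∃ F : Euc n → ℝ → ℝ,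
    ContDiffOn ℝ (⊤ : ℕ∞) (fun p : Euc n × ℝ => F p.1 p.2)
      (ball x₀ r ×ˢ Ioo (t₀ - r) (t₀ + r)) ∧
    (∀ x ∈ ball x₀ r, ∀ t ∈ Ioo (t₀ - r) (t₀ + r), t ∈ I → (F x t = 0 ↔ x ∈ Mfam t)) ∧
    ∀ x ∈ ball x₀ r, ∀ t ∈ Ioo (t₀ - r) (t₀ + r), t ∈ I → F x t = 0 →
      gradient (F · t) x ≠ 0 ∧
      deriv (F x) t = lapl (F · t) x -
        ⟪hessOp (F · t) x (gradient (F · t) x), gradient (F · t) x⟫ /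
          ‖gradient (F · t) x‖ ^ 2

/-! ### Self-expanders and stability -/

/-- `S` is a self-expander: a smooth hypersurface with `H - ⟨x,ν⟩/2 = 0`. -/
def IsSelfExpander (S : Set (Euc n)) : Prop :=
  IsSmoothHypersurface S ∧
    ∀ x ∈ S, ∀ d : LocalDefFn n S x,
      meanCurvF d.f x = ⟪x, unitNormalOfFn d.f x⟫ / 2

/-- `n`-dimensional Hausdorff measure on `ℝ^{n+1}`. -/
def sMeasure (n : ℕ) : Measure (Euc n) := Measure.hausdorffMeasure (n : ℝ)

/-- `S` is a stable self-expander: the second variation of the expander functional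
`ℰ(M) = ∫ e^{|x|²/4}` is nonnegative, i.e. `∫_S φ(-L_S φ) e^{|x|²/4} ≥ 0` for compactly
supported smooth `φ`. -/
def IsStableExpander (S : Set (Euc n)) : Prop :=
  IsSelfExpander S ∧
    ∀ φ : Euc n → ℝ, ContDiff ℝ (⊤ : ℕ∞) φ → HasCompactSupport φ →
      0 ≤ ∫ x in S, φ x * (-(jacobiOf S φ x)) * Real.exp (‖x‖ ^ 2 / 4) ∂sMeasure n

/-- `φ` is the (positive) first Dirichlet eigenfunction of the Jacobi operator `L_S` on
`S ∩ B_R(0)`, with eigenvalue `lam`: `L_S φ + lam φ = 0` on `S ∩ B_R`, `φ > 0` inside,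
`φ = 0` on the boundary sphere, and `lam > 0`. -/
def IsFirstDirichletEigenfunction (S : Set (Euc n)) (R : ℝ) (φ : Euc n → ℝ) (lam : ℝ) :
    Prop :=
  ContDiff ℝ (⊤ : ℕ∞) φ ∧ 0 < lam ∧
    (∀ x ∈ S ∩ ball 0 R, 0 < φ x) ∧
    (∀ x ∈ S ∩ sphere 0 R, φ x = 0) ∧
    ∀ x ∈ S ∩ ball 0 R, jacobiOf S φ x + lam * φ x = 0

/-- The closest point projection onto the set `C` (a choice of nearest point). -/
def closestPointTo (C : Set (Euc n)) (x : Euc n) : Euc n :=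
  if h : ∃ y, y ∈ C ∧ ∀ z ∈ C, dist x y ≤ dist x z then h.choose else 0

/-- The projection `π_Γ` onto the link of the cone `C`: closest point projection onto `C`
followed by the radial projection onto `C ∩ 𝕊ⁿ`. -/
def linkProj (C : Set (Euc n)) (x : Euc n) : Euc n :=
  ‖closestPointTo C x‖⁻¹ • closestPointTo C x

/-- `v` is a positive Jacobi field on the expander `S` (asymptotic to the cone `C`) of linear
growth with asymptotic profile `ψ`: `L_S v = 0`, `v > 0`, `|∇^ℓ v| = O(r^{1-ℓ})` for all `ℓ`,
and `v = r·(ψ ∘ π_Γ) + w` with `|w| = O(r^{-1})` and `|∇_S w| = O(r^{-2})`. -/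
def IsLinearGrowthJacobiField (S C : Set (Euc n)) (ψ v : Euc n → ℝ) : Prop :=
  ContDiff ℝ (⊤ : ℕ∞) v ∧ (∀ x ∈ S, 0 < v x) ∧ (∀ x ∈ S, jacobiOf S v x = 0) ∧
    (∀ ℓ : ℕ, ∃ c > (0 : ℝ), ∃ R > (0 : ℝ), ∀ x ∈ S, R ≤ ‖x‖ →
      ‖iteratedFDeriv ℝ ℓ v x‖ ≤ c * ‖x‖ ^ ((1 : ℝ) - (ℓ : ℝ))) ∧
    ∃ w : Euc n → ℝ, ContDiff ℝ (⊤ : ℕ∞) w ∧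
      (∃ R > (0 : ℝ), ∀ x ∈ S, R ≤ ‖x‖ → v x = ‖x‖ * ψ (linkProj C x) + w x) ∧
      ∃ c > (0 : ℝ), ∃ R > (0 : ℝ), ∀ x ∈ S, R ≤ ‖x‖ →
        |w x| ≤ c * ‖x‖⁻¹ ∧ ‖tangGradOf S w x‖ ≤ c * (‖x‖⁻¹ ^ 2)

/-! ### Graphs and barriers -/

/-- The normal graph `{x + u(x) ν(x) : x ∈ S}` over (a subset of) a hypersurface. -/
def normalGraph (S : Set (Euc n)) (ν : Euc n → Euc n) (u : Euc n → ℝ) : Set (Euc n) :=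
  (fun x => x + u x • ν x) '' S

/-- The region (weakly) below the normal graph of `u` over `S`, relative to `ν`. -/
def normalRegionLE (S : Set (Euc n)) (ν : Euc n → Euc n) (u : Euc n → ℝ) : Set (Euc n) :=
  {y | ∃ x ∈ S, ∃ r : ℝ, r ≤ u x ∧ y = x + r • ν x}

/-- The region strictly below the normal graph of `u` over `S`, relative to `ν`. -/
def normalRegionLT (S : Set (Euc n)) (ν : Euc n → Euc n) (u : Euc n → ℝ) : Set (Euc n) :=
  {y | ∃ x ∈ S, ∃ r : ℝ, r < u x ∧ y = x + r • ν x}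

/-- The region (weakly) above the normal graph of `u` over `S`, relative to `ν`. -/
def normalRegionGE (S : Set (Euc n)) (ν : Euc n → Euc n) (u : Euc n → ℝ) : Set (Euc n) :=
  {y | ∃ x ∈ S, ∃ r : ℝ, u x ≤ r ∧ y = x + r • ν x}

/-- A (time-independent) barrier `Γ` for rescaled mean curvature flow relative to the side
region `Ω`: no classical rescaled mean curvature flow which stays in `Ω` and is initially
disjoint from `Γ` can ever touch `Γ`.  With `Ω` the region below `Γ` this says `Γ` is a
supersolution of rescaled MCF; with `Ω` the region above, a subsolution. -/
def IsRMCFBarrier (Γ Ω : Set (Euc n)) : Prop :=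
  ∀ Ψ : ClassicalRescaledMCF n,
    (∀ t ∈ Icc Ψ.a Ψ.b, Ψ.slice t ⊆ Ω) →
    Disjoint (Ψ.slice Ψ.a) Γ →
    ∀ t ∈ Icc Ψ.a Ψ.b, Disjoint (Ψ.slice t) Γ

/-- A time-dependent barrier `Γ t` for mean curvature flow relative to the side regions `Ω t`,
for times in `I`: no classical mean curvature flow in `Ω` initially disjoint from `Γ` can
touch `Γ`. -/
def IsMCFBarrier (Γ Ω : ℝ → Set (Euc n)) (I : Set ℝ) : Prop :=
  ∀ Ψ : ClassicalMCF n, Icc Ψ.a Ψ.b ⊆ I →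
    (∀ t ∈ Icc Ψ.a Ψ.b, Ψ.slice t ⊆ Ω t) →
    Disjoint (Ψ.slice Ψ.a) (Γ Ψ.a) →
    ∀ t ∈ Icc Ψ.a Ψ.b, Disjoint (Ψ.slice t) (Γ t)

/-- A time-dependent barrier away from its boundary: flows in `Ω` initially disjoint from `Γ`
can only touch `Γ` within the boundary portion `Bd`. -/
def IsMCFBarrierAway (Γ Ω Bd : ℝ → Set (Euc n)) (I : Set ℝ) : Prop :=
  ∀ Ψ : ClassicalMCF n, Icc Ψ.a Ψ.b ⊆ I →
    (∀ t ∈ Icc Ψ.a Ψ.b, Ψ.slice t ⊆ Ω t) →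
    Disjoint (Ψ.slice Ψ.a) (Γ Ψ.a) →
    ∀ t ∈ Icc Ψ.a Ψ.b, Ψ.slice t ∩ Γ t ⊆ Bd t

/-- The welded barrier function over the expander: `f_{3R,α} = v + α φ_{3R}` on `Σ_R`,
`min(f_{3R,α}, h)` on the annulus, and the constant `h` outside `B_{2R}`. -/
def weldedBarrierFn (v φ3R : Euc n → ℝ) (α h R : ℝ) (x : Euc n) : ℝ :=
  if ‖x‖ ≤ R then v x + α * φ3R x
  else if ‖x‖ < 2 * R then min (v x + α * φ3R x) h
  else h

/-! ### Brakke flows -/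

/-- An (integral) Brakke flow in `ℝ^{n+1}`: a family of Radon measures `μ t` together with a
generalized mean curvature vector field `Hv`, satisfying Brakke's inequality against smooth
nonnegative compactly supported test functions. -/
structure BrakkeFlow (n : ℕ) where
  μ : ℝ → Measure (Euc n)
  Hv : ℝ → Euc n → Euc n
  locFinite : ∀ t ≥ (0 : ℝ), ∀ x : Euc n, ∀ r > (0 : ℝ), μ t (closedBall x r) < ⊤
  brakkeIneq : ∀ t₁ t₂ : ℝ, 0 ≤ t₁ → t₁ ≤ t₂ →
    ∀ f : Euc n → ℝ → ℝ,
      ContDiff ℝ (⊤ : ℕ∞) (fun p : Euc n × ℝ => f p.1 p.2) →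
      HasCompactSupport (fun p : Euc n × ℝ => f p.1 p.2) →
      (∀ x t, 0 ≤ f x t) →
      (∫ x, f x t₂ ∂μ t₂) - ∫ x, f x t₁ ∂μ t₁ ≤
        ∫ t in t₁..t₂, ∫ x,
          (-(‖Hv t x‖ ^ 2) * f x t + ⟪Hv t x, gradient (f · t) x⟫ + deriv (f x) t) ∂μ t

/-- The support of the time-`t` slice of a Brakke flow. -/
def BrakkeFlow.spt (X : BrakkeFlow n) (t : ℝ) : Set (Euc n) :=
  {x | ∀ r > (0 : ℝ), 0 < X.μ t (ball x r)}

/-- The `n`-dimensional backwards heat kernel based at `(x₀,t₀)`. -/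
def backwardHeatKernel (n : ℕ) (x₀ : Euc n) (t₀ : ℝ) (x : Euc n) (t : ℝ) : ℝ :=
  (4 * Real.pi * (t₀ - t)) ^ (-(n : ℝ) / 2) * Real.exp (-‖x - x₀‖ ^ 2 / (4 * (t₀ - t)))

/-- The Gaussian density of the Brakke flow `X` at the spacetime point `(x₀,t₀)`:
`Θ(x₀,t₀) = lim_{r↘0} ∫ ρ_{(x₀,t₀)}(x,t₀-r²) dμ(t₀-r²)`. -/
def BrakkeFlow.gaussianDensity (X : BrakkeFlow n) (x₀ : Euc n) (t₀ : ℝ) : ℝ :=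
  limsup (fun r : ℝ => ∫ x, backwardHeatKernel n x₀ t₀ x (t₀ - r ^ 2) ∂X.μ (t₀ - r ^ 2))
    (𝓝[>] 0)

/-- The Brakke flow `X` is a smooth, multiplicity-one mean curvature flow in the open region
`U` for times in `I`: the measures are `n`-dimensional Hausdorff measure on the support, and
near every point of the support the flow is a regular zero level set moving by the level-set
mean curvature flow PDE. -/
def BrakkeFlow.IsSmoothIn (X : BrakkeFlow n) (U : Set (Euc n)) (I : Set ℝ) : Prop :=
  (∀ t ∈ I, (X.μ t).restrict U = (sMeasure n).restrict (X.spt t ∩ U)) ∧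
    ∀ t₀ ∈ I, ∀ x₀ ∈ X.spt t₀ ∩ U, ∃ r > 0, ∃ F : Euc n → ℝ → ℝ,
      ContDiffOn ℝ (⊤ : ℕ∞) (fun p : Euc n × ℝ => F p.1 p.2)
        (ball x₀ r ×ˢ Ioo (t₀ - r) (t₀ + r)) ∧
      (∀ x ∈ ball x₀ r, ∀ t ∈ Ioo (t₀ - r) (t₀ + r), t ∈ I →
        (F x t = 0 ↔ x ∈ X.spt t)) ∧
      ∀ x ∈ ball x₀ r, ∀ t ∈ Ioo (t₀ - r) (t₀ + r), t ∈ I → F x t = 0 →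
        gradient (F · t) x ≠ 0 ∧
        deriv (F x) t = lapl (F · t) x -
          ⟪hessOp (F · t) x (gradient (F · t) x), gradient (F · t) x⟫ /
            ‖gradient (F · t) x‖ ^ 2

/-- Unit regularity: near any spacetime point of Gaussian density `1`, the flow is smooth. -/
def BrakkeFlow.UnitRegular (X : BrakkeFlow n) : Prop :=
  ∀ x₀ : Euc n, ∀ t₀ > (0 : ℝ), X.gaussianDensity x₀ t₀ = 1 →
    ∃ ε > 0, X.IsSmoothIn (ball x₀ ε) (Ioo (t₀ - ε ^ 2) (t₀ + ε ^ 2))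

/-- Convergence of Brakke flows (in the weak-* sense at each time). -/
def BrakkeConverges (Xi : ℕ → BrakkeFlow n) (X : BrakkeFlow n) : Prop :=
  ∀ t ≥ (0 : ℝ), ∀ f : Euc n → ℝ, Continuous f → HasCompactSupport f →
    Tendsto (fun i => ∫ x, f x ∂(Xi i).μ t) atTop (𝓝 (∫ x, f x ∂X.μ t))

/-- The parabolic dilation `𝒟_λ` of a Brakke flow: its time-`t` measure. -/
def dilatedMeasure (X : BrakkeFlow n) (lam t : ℝ) : Measure (Euc n) :=
  ENNReal.ofReal (lam ^ n) • (X.μ (t / lam ^ 2)).map (fun x => lam • x)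

/-- The parabolic dilations `𝒟_λ(X)` converge, as `λ → ∞`, to the self-expanding Brakke flow
`t ↦ ℋⁿ⌊√t·S` associated to the self-expander `S`. -/
def DilationsConvergeTo (X : BrakkeFlow n) (S : Set (Euc n)) : Prop :=
  ∀ t > (0 : ℝ), ∀ f : Euc n → ℝ, Continuous f → HasCompactSupport f →
    Tendsto (fun lam : ℝ => ∫ x, f x ∂dilatedMeasure X lam t) atTop
      (𝓝 (∫ x in Real.sqrt t • S, f x ∂sMeasure n))

/-! ### Smoothings of admissible sets -/

/-- A smoothing of an admissible set `F` (conditions (1)–(5) of Chodosh–Daniels-Holgate–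
Schulze, §2.3): nested compact smooth regions `F_i` decreasing to `F`, with Hausdorff
measure convergence of the boundaries, uniform area ratio bounds, and non-fattening
boundaries. -/
structure Smoothing (n : ℕ) (F : Set (Euc n)) where
  Fi : ℕ → Set (Euc n)
  cptFi : ∀ i, IsCompact (Fi i)
  admFi : ∀ i, Admissible (Fi i)
  smoothBdry : ∀ i, IsSmoothHypersurface (frontier (Fi i))
  contained : ∀ i, F ⊆ interior (Fi i)
  nested : ∀ i, Fi (i + 1) ⊆ interior (Fi i)
  inter : (⋂ i, Fi i) = F
  radon : ∀ K : Set (Euc n), IsCompact K → sMeasure n (frontier F ∩ K) < ⊤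
  measConv : ∀ f : Euc n → ℝ, Continuous f → HasCompactSupport f →
    Tendsto (fun i => ∫ x in frontier (Fi i), f x ∂sMeasure n) atTop
      (𝓝 (∫ x in frontier F, f x ∂sMeasure n))
  areaBound : ∃ Λ > (0 : ℝ), ∀ i, ∀ p : Euc n, ∀ ρ > (0 : ℝ),
    sMeasure n (frontier (Fi i) ∩ closedBall p ρ) ≤ ENNReal.ofReal (Λ * ρ ^ n)
  nonfattening : ∀ i, ∀ G : ℝ → Set (Euc n), IsLevelSetFlow (frontier (Fi i)) G →
    ∀ t ≥ (0 : ℝ), interior (G t) = ∅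

/-! ### Close and far barriers over a flow converging to an expander -/

/-- The rescaled close barrier: `√t ⬝ {x + g(x) ν(x) : x ∈ S ∩ B_{2R}}`. -/
def closeGraph (S : Set (Euc n)) (ν : Euc n → Euc n) (g : Euc n → ℝ) (t R : ℝ) :
    Set (Euc n) :=
  Real.sqrt t • ((fun x => x + g x • ν x) '' (S ∩ ball 0 (2 * R)))

/-- The boundary of the close barrier: the graph over `S ∩ ∂B_{2R}`. -/
def closeGraphBdry (S : Set (Euc n)) (ν : Euc n → Euc n) (g : Euc n → ℝ) (t R : ℝ) :
    Set (Euc n) :=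
  Real.sqrt t • ((fun x => x + g x • ν x) '' (S ∩ sphere 0 (2 * R)))

/-- The region (weakly) below the close barrier. -/
def closeRegionLE (S : Set (Euc n)) (ν : Euc n → Euc n) (g : Euc n → ℝ) (t R : ℝ) :
    Set (Euc n) :=
  Real.sqrt t • {y | ∃ x ∈ S ∩ ball 0 (2 * R), ∃ r : ℝ, r ≤ g x ∧ y = x + r • ν x}

/-- The region (weakly) above the close barrier. -/
def closeRegionGE (S : Set (Euc n)) (ν : Euc n → Euc n) (g : Euc n → ℝ) (t R : ℝ) :
    Set (Euc n) :=
  Real.sqrt t • {y | ∃ x ∈ S ∩ ball 0 (2 * R), ∃ r : ℝ, g x ≤ r ∧ y = x + r • ν x}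

/-- The far barrier: the normal graph at height `c` over `Mfam t \ B_{√t R}`. -/
def farGraph (Mfam : ℝ → Set (Euc n)) (νM : ℝ → Euc n → Euc n) (c t R : ℝ) :
    Set (Euc n) :=
  (fun z => z + c • νM t z) '' (Mfam t \ ball 0 (Real.sqrt t * R))

/-- The boundary of the far barrier: the graph over `Mfam t ∩ ∂B_{√t R}`. -/
def farGraphBdry (Mfam : ℝ → Set (Euc n)) (νM : ℝ → Euc n → Euc n) (c t R : ℝ) :
    Set (Euc n) :=
  (fun z => z + c • νM t z) '' (Mfam t ∩ sphere 0 (Real.sqrt t * R))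

/-- The region (weakly) below the far barrier at height `c`. -/
def farRegionLE (Mfam : ℝ → Set (Euc n)) (νM : ℝ → Euc n → Euc n) (c t R : ℝ) :
    Set (Euc n) :=
  {y | ∃ z ∈ Mfam t \ ball 0 (Real.sqrt t * R), ∃ r : ℝ, r ≤ c ∧ y = z + r • νM t z}

/-- The region (weakly) above the far barrier at height `c`. -/
def farRegionGE (Mfam : ℝ → Set (Euc n)) (νM : ℝ → Euc n → Euc n) (c t R : ℝ) :
    Set (Euc n) :=
  {y | ∃ z ∈ Mfam t \ ball 0 (Real.sqrt t * R), ∃ r : ℝ, c ≤ r ∧ y = z + r • νM t z}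

/-! ### Graphs over a ball in a hyperplane (for the pseudo-barrier) -/

/-- The last coordinate unit vector `e_{n+1}`. -/
def lastVec (n : ℕ) : Euc n := EuclideanSpace.single (Fin.last n) 1

/-- Projection onto the hyperplane `{x_{n+1} = 0}`. -/
def horizProj (y : Euc n) : Euc n := y - ⟪y, lastVec n⟫ • lastVec n

/-- The open unit ball `B₁ⁿ(0)` in the hyperplane `{x_{n+1} = 0}`. -/
def horizBall (n : ℕ) : Set (Euc n) := {x : Euc n | x = horizProj x ∧ ‖x‖ < 1}

/-- The defining function `y ↦ y_{n+1} - u(ŷ, t)` of the graph of `u(·,t)`. -/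
def graphDefFn (u : Euc n → ℝ → ℝ) (y : Euc n) (t : ℝ) : ℝ :=
  ⟪y, lastVec n⟫ - u (horizProj y) t

/-- The upward unit normal of the graph of `u(·,t)`. -/
def graphUpNormal (u : Euc n → ℝ → ℝ) (t : ℝ) (y : Euc n) : Euc n :=
  unitNormalOfFn (fun z => graphDefFn u z t) y

/-- The graph `{(x̂, u(x̂,t)) : x̂ ∈ B₁ⁿ(0)}`. -/
def graphFlow (u : Euc n → ℝ → ℝ) (t : ℝ) : Set (Euc n) :=
  (fun x => x + u x t • lastVec n) '' horizBall n

set_option maxHeartbeats 1000000 in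
/-- **Crossing of the sub/supersolutions** (Lemma 3.1).  Let `Sg` be a smooth stable
self-expander asymptotic to a smooth cone `C`, with positive Jacobi field `v = r + w`
(`|w| = O(r^{-1})`, `|∇w| = O(r^{-2})`) and first Dirichlet eigenfunctions `φ_R` of the
Jacobi operator with eigenvalues `μ_R > 0`.  Then there is `R₀ = R₀(Σ)` so that for every
`R ≥ R₀` there is `α₀ = α₀(R,Σ) > 0` such that for `α ∈ (0,α₀)`, setting
`f_{3R,α} = v + α φ_{3R}` and `h = max_{∂Σ_R} f_{3R,α}`, we have `h ≥ f_{3R,α}` on `∂Σ_R`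
and `h ≤ f_{3R,α}` on `∂Σ_{2R}`. -/
theorem crossing_lemma (n : ℕ)
    (Sg C : Set (Euc n)) (hC : IsSmoothCone C)
    (hSg : IsStableExpander Sg)
    (hasym : SmoothlyTendsTo (𝓝[>] (0 : ℝ)) (fun ρ : ℝ => ρ • Sg) C ({0} : Set (Euc n)))
    (v : Euc n → ℝ) (hv : IsLinearGrowthJacobiField Sg C (fun _ => 1) v)
    (φ : ℝ → Euc n → ℝ) (lam : ℝ → ℝ)
    (hφ : ∀ R > (0 : ℝ), IsFirstDirichletEigenfunction Sg R (φ R) (lam R)) :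
    ∃ R₀ > (0 : ℝ), ∀ R ≥ R₀, ∃ α₀ > (0 : ℝ), ∀ α ∈ Ioo (0 : ℝ) α₀, ∀ h : ℝ,
      IsGreatest ((fun x => v x + α * φ (3 * R) x) '' (Sg ∩ sphere (0 : Euc n) R)) h →
      (∀ x ∈ Sg ∩ sphere (0 : Euc n) R, v x + α * φ (3 * R) x ≤ h) ∧
        ∀ x ∈ Sg ∩ sphere (0 : Euc n) (2 * R), h ≤ v x + α * φ (3 * R) x := by
  obtain ⟨hvc, hvpos, hvjac, hgrowth, w, hws, ⟨R₁, hR₁, hvw⟩, c, hc, R₂, hR₂, hwbd⟩ := hv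
  refine ⟨max (max R₁ R₂) (max (4 * c + 1) 1), by positivity, ?_⟩
  intro R hR
  have hR1 : R₁ ≤ R := le_trans (le_trans (le_max_left _ _) (le_max_left _ _)) hR
  have hR2 : R₂ ≤ R := le_trans (le_trans (le_max_right _ _) (le_max_left _ _)) hR
  have hR4c : 4 * c + 1 ≤ R := le_trans (le_trans (le_max_left _ _) (le_max_right _ _)) hR
  have hRone : (1 : ℝ) ≤ R := le_trans (le_trans (le_max_right _ _) (le_max_right _ _)) hR
  have hRpos : (0 : ℝ) < R := lt_of_lt_of_le one_pos hRone
  have hbdd : BddAbove ((φ (3 * R)) '' sphere (0 : Euc n) R) :=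
    (isCompact_sphere 0 R).bddAbove_image
      ((hφ (3 * R) (by positivity)).1.continuous.continuousOn)
  obtain ⟨M, hM⟩ := hbdd
  refine ⟨R / (2 * (|M| + 1)), by positivity, ?_⟩
  rintro α ⟨hα0, hα1⟩ h hh
  refine ⟨fun x hx => hh.2 ⟨x, hx, rfl⟩, ?_⟩
  intro x hx
  obtain ⟨x₀, hx₀, hx₀eq⟩ := hh.1
  have hx₀S : x₀ ∈ Sg := hx₀.1
  have hnx₀ : ‖x₀‖ = R := by simpa using hx₀.2
  have hxS : x ∈ Sg := hx.1
  have hnx : ‖x‖ = 2 * R := by simpa using hx.2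
  have hvx₀ : v x₀ = ‖x₀‖ * 1 + w x₀ := hvw x₀ hx₀S (by rw [hnx₀]; exact hR1)
  have hvx : v x = ‖x‖ * 1 + w x := hvw x hxS (by rw [hnx]; nlinarith)
  have hw₀ : |w x₀| ≤ c * ‖x₀‖⁻¹ := (hwbd x₀ hx₀S (by rw [hnx₀]; exact hR2)).1
  have hwx : |w x| ≤ c * ‖x‖⁻¹ := (hwbd x hxS (by rw [hnx]; nlinarith)).1
  have hφpos : 0 < φ (3 * R) x :=
    (hφ (3 * R) (by positivity)).2.2.1 x ⟨hxS, by
      rw [mem_ball_zero_iff, hnx]; linarith⟩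
  have hφM : φ (3 * R) x₀ ≤ M := hM ⟨x₀, hx₀.2, rfl⟩
  have hMabs : M ≤ |M| := le_abs_self M
  have hαM : α * φ (3 * R) x₀ ≤ R / 2 := by
    have h1 : α * φ (3 * R) x₀ ≤ α * (|M| + 1) := by nlinarith
    have h2 : α * (|M| + 1) ≤ R / 2 := by
      have habs : (0 : ℝ) < 2 * (|M| + 1) := by positivity
      have := (lt_div_iff₀ habs).mp hα1
      nlinarith
    linarith
  have hw₀' : w x₀ ≤ c * R⁻¹ := by
    rw [hnx₀] at hw₀; exact le_trans (le_abs_self _) hw₀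
  have hwx' : -(c * (2 * R)⁻¹) ≤ w x := by
    rw [hnx] at hwx; exact neg_le_of_abs_le hwx
  have hRinv : R * R⁻¹ = 1 := mul_inv_cancel₀ (ne_of_gt hRpos)
  have h2Rinv : (2 * R)⁻¹ = R⁻¹ / 2 := by
    rw [mul_inv]; ring
  have hcR : c * R⁻¹ ≤ 1 / 4 := by
    have hinv : R⁻¹ ≤ 1 := by
      rw [inv_le_one_iff₀]; right; exact hRone
    have hinvpos : (0 : ℝ) < R⁻¹ := inv_pos.mpr hRpos
    nlinarith
  have key : R + c * R⁻¹ + R / 2 ≤ 2 * R - c * (2 * R)⁻¹ := by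
    rw [h2Rinv]; nlinarith
  have hαφx : 0 ≤ α * φ (3 * R) x := le_of_lt (mul_pos hα0 hφpos)
  change v x₀ + α * φ (3 * R) x₀ = h at hx₀eq
  rw [← hx₀eq, hvx₀, hvx, hnx₀, hnx]
  linarith

end
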